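/- In every finite geometry with at least two lines there exists an injection σ from the point set P to the line set 𝓛 such that every point p is incident with its image line: p ∈ σ(p) (theorem of Bleijenga). -/

import Mathlib

/-!
By Hall's marriage theorem it suffices that every set `s` of points meets at least `#s` lines.
If `s` lies on a line `ℓ`, pick a point `x` off `ℓ` (there is one, as there are two lines): the
lines joining `x` to the points of `s` are distinct. Otherwise the points of `s` together with
the lines meeting `s` twice form a linear space, and the de Bruijn–Erdős inequality applies.
-/

/-- A finite geometry (finite linear space): any two distinct points lie on exactly one
common line, and every line contains at least two points. -/
def IsGeometry {P : Type*} (lines : Finset (Finset P)) : Prop :=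
  (∀ p q : P, p ≠ q → ∃! ℓ, ℓ ∈ lines ∧ p ∈ ℓ ∧ q ∈ ℓ) ∧
  (∀ ℓ ∈ lines, 2 ≤ ℓ.card)

open Finset

namespace IsGeometry

variable {P : Type*} {lines : Finset (Finset P)} (hL : IsGeometry lines)
include hL

noncomputable def line {p q : P} (h : p ≠ q) : Finset P :=
  (hL.1 p q h).exists.choose

theorem line_mem {p q : P} (h : p ≠ q) : hL.line h ∈ lines :=
  (hL.1 p q h).exists.choose_spec.1

theorem left_mem_line {p q : P} (h : p ≠ q) : p ∈ hL.line h :=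
  (hL.1 p q h).exists.choose_spec.2.1

theorem right_mem_line {p q : P} (h : p ≠ q) : q ∈ hL.line h :=
  (hL.1 p q h).exists.choose_spec.2.2

theorem eq_of_mem {p q : P} (h : p ≠ q) {ℓ₁ ℓ₂ : Finset P} (hℓ₁ : ℓ₁ ∈ lines)
    (hℓ₂ : ℓ₂ ∈ lines) (hp₁ : p ∈ ℓ₁) (hq₁ : q ∈ ℓ₁) (hp₂ : p ∈ ℓ₂) (hq₂ : q ∈ ℓ₂) :
    ℓ₁ = ℓ₂ :=
  (hL.1 p q h).unique ⟨hℓ₁, hp₁, hq₁⟩ ⟨hℓ₂, hp₂, hq₂⟩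

theorem exists_notMem (hlines : 2 ≤ lines.card) {ℓ : Finset P} (hℓ : ℓ ∈ lines) :
    ∃ x, x ∉ ℓ := by
  obtain ⟨ℓ', hℓ', hne⟩ := exists_mem_ne (by omega : 1 < lines.card) ℓ
  obtain ⟨a, ha, b, hb, hab⟩ := one_lt_card.mp (hL.2 ℓ' hℓ')
  by_contra! hall
  exact hne (hL.eq_of_mem hab hℓ' hℓ ha hb (hall a) (hall b))

theorem exists_mem_line (hne : lines.Nonempty) (p : P) : ∃ ℓ ∈ lines, p ∈ ℓ := by
  obtain ⟨ℓ, hℓ⟩ := hne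
  by_cases hp : p ∈ ℓ
  · exact ⟨ℓ, hℓ, hp⟩
  obtain ⟨q, hq⟩ := card_pos.mp (by linarith [hL.2 ℓ hℓ] : 0 < ℓ.card)
  have hpq : p ≠ q := fun h => hp (h ▸ hq)
  exact ⟨hL.line hpq, hL.line_mem hpq, hL.left_mem_line hpq⟩

end IsGeometry

section

variable {P : Type*} [DecidableEq P]

def linesThrough (lines : Finset (Finset P)) (p : P) : Finset (Finset P) :=
  lines.filter (p ∈ ·)

def secants (lines : Finset (Finset P)) (s : Finset P) : Finset (Finset P) :=
  lines.filter fun ℓ => 1 < (s ∩ ℓ).card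

theorem mem_secants {lines : Finset (Finset P)} {s ℓ : Finset P} :
    ℓ ∈ secants lines s ↔ ℓ ∈ lines ∧ ∃ a ∈ s, ∃ b ∈ s, a ≠ b ∧ a ∈ ℓ ∧ b ∈ ℓ := by
  simp only [secants, mem_filter, one_lt_card, mem_inter]
  aesop

theorem secants_subset_biUnion_linesThrough (lines : Finset (Finset P)) (s : Finset P) :
    secants lines s ⊆ s.biUnion (linesThrough lines) := by
  intro ℓ hℓ
  obtain ⟨hℓ, a, ha, -, -, -, haℓ, -⟩ := mem_secants.mp hℓ
  exact mem_biUnion.mpr ⟨a, ha, mem_filter.mpr ⟨hℓ, haℓ⟩⟩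

namespace IsGeometry

variable {lines : Finset (Finset P)} (hL : IsGeometry lines)
include hL

theorem line_mem_secants {s : Finset P} {p q : P} (hp : p ∈ s) (hq : q ∈ s) (h : p ≠ q) :
    hL.line h ∈ secants lines s :=
  mem_secants.mpr ⟨hL.line_mem h, p, hp, q, hq, h, hL.left_mem_line h, hL.right_mem_line h⟩

/-- De Bruijn–Erdős for the geometry induced on `s`, whose lines are the secants of `s`. -/
theorem card_le_card_secants (hne : lines.Nonempty) {s : Finset P}
    (hs : ∀ ℓ ∈ lines, ¬s ⊆ ℓ) : s.card ≤ (secants lines s).card := by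
  let : Membership s (secants lines s) := ⟨fun ℓ p => (p : P) ∈ (ℓ : Finset P)⟩
  have : Configuration.HasLines s (secants lines s) :=
    { exists_point := fun ℓ => by
        obtain ⟨u, hu, huℓ⟩ := not_subset.mp (hs ℓ (mem_filter.mp ℓ.2).1)
        exact ⟨⟨u, hu⟩, huℓ⟩
      exists_line := fun ⟨p, hp⟩ => by
        obtain ⟨ℓ, hℓ, hpℓ⟩ := hL.exists_mem_line hne p
        obtain ⟨a, ha, haℓ⟩ := not_subset.mp (hs ℓ hℓ)
        have hpa : p ≠ a := fun h => haℓ (h ▸ hpℓ)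
        obtain ⟨u, hu, hupa⟩ := not_subset.mp (hs _ (hL.line_mem hpa))
        have hau : a ≠ u := fun h => hupa (h ▸ hL.right_mem_line hpa)
        refine ⟨⟨hL.line hau, hL.line_mem_secants ha hu hau⟩, fun hpau => hupa ?_⟩
        rw [hL.eq_of_mem hpa (hL.line_mem hpa) (hL.line_mem hau) (hL.left_mem_line hpa)
          (hL.right_mem_line hpa) hpau (hL.left_mem_line hau)]
        exact hL.right_mem_line hau
      eq_or_eq := fun {p q ℓ₁ ℓ₂} hp₁ hq₁ hp₂ hq₂ => by
        by_cases hpq : p = q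
        · exact Or.inl hpq
        · exact Or.inr <| Subtype.ext <| hL.eq_of_mem (Subtype.coe_ne_coe.mpr hpq)
            (mem_filter.mp ℓ₁.2).1 (mem_filter.mp ℓ₂.2).1 hp₁ hq₁ hp₂ hq₂
      mkLine := fun {p q} h =>
        ⟨hL.line (Subtype.coe_ne_coe.mpr h), hL.line_mem_secants p.2 q.2 _⟩
      mkLine_ax := fun h =>
        ⟨hL.left_mem_line (Subtype.coe_ne_coe.mpr h),
          hL.right_mem_line (Subtype.coe_ne_coe.mpr h)⟩ }
  simpa only [Fintype.card_coe] using Configuration.HasLines.card_le s (secants lines s)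

/-- Lines through a fixed point `x` off `ℓ` separate the points of `ℓ`. -/
theorem card_le_card_biUnion_linesThrough_of_subset {s ℓ : Finset P} (hℓ : ℓ ∈ lines)
    (hsℓ : s ⊆ ℓ) {x : P} (hx : x ∉ ℓ) : s.card ≤ (s.biUnion (linesThrough lines)).card := by
  have hpx : ∀ p ∈ s, p ≠ x := fun p hp h => hx (h ▸ hsℓ hp)
  refine card_le_card_of_injOn (fun p => if h : p = x then ∅ else hL.line h) ?_ ?_
  · intro p hp
    simp only [coe_biUnion, mem_coe, Set.mem_iUnion, dif_neg (hpx p hp)]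
    exact ⟨p, hp, mem_filter.mpr ⟨hL.line_mem _, hL.left_mem_line _⟩⟩
  · intro p hp q hq hpq
    simp only [dif_neg (hpx p hp), dif_neg (hpx q hq)] at hpq
    by_contra hne
    refine hx ?_
    rw [hL.eq_of_mem hne hℓ (hL.line_mem (hpx p hp)) (hsℓ hp) (hsℓ hq) (hL.left_mem_line _)
      (hpq ▸ hL.left_mem_line _)]
    exact hL.right_mem_line _

theorem card_le_card_biUnion_linesThrough (hlines : 2 ≤ lines.card) (s : Finset P) :
    s.card ≤ (s.biUnion (linesThrough lines)).card := by
  by_cases hcol : ∃ ℓ ∈ lines, s ⊆ ℓ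
  · obtain ⟨ℓ, hℓ, hsℓ⟩ := hcol
    obtain ⟨x, hx⟩ := hL.exists_notMem hlines hℓ
    exact hL.card_le_card_biUnion_linesThrough_of_subset hℓ hsℓ hx
  · push Not at hcol
    exact (hL.card_le_card_secants (card_pos.mp (by omega)) hcol).trans
      (card_le_card (secants_subset_biUnion_linesThrough lines s))

end IsGeometry

end

theorem bleijenga {P : Type*} [Fintype P] (lines : Finset (Finset P))
    (hgeom : IsGeometry lines) (hlines : 2 ≤ lines.card) :
    ∃ σ : P → Finset P, Function.Injective σ ∧ ∀ p : P, σ p ∈ lines ∧ p ∈ σ p := by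
  classical
  obtain ⟨σ, hσ, hσ_mem⟩ := (all_card_le_biUnion_card_iff_exists_injective
    (linesThrough lines)).mp (hgeom.card_le_card_biUnion_linesThrough hlines)
  exact ⟨σ, hσ, fun p => mem_filter.mp (hσ_mem p)⟩
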